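/- arXiv:0706.3630 — 4 statements merged into one kernel-verified Lean document; each statement's English description precedes it below -/
import Mathlib

section
/- For all integers n ≥ 1 and d ≥ 1, the number of subgroups of ℤ^d of index n is at least n^{d-1}. -/
/-!
A subgroup `H` of index `n` contains `n • ℤ^d`, so it is determined by its image in the finite
group `(ℤ/n)^d`; hence there are finitely many of them. For the lower bound, write `d = m + 1`: each
`a ∈ (ℤ/n)^m` gives the surjection `x ↦ x₀ + ∑ aᵢ xᵢ₊₁` onto `ℤ/n`, whose kernel has index `n`.
Normalising the first coefficient to `1` makes the kernel determine `a`, because it contains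
`eᵢ₊₁ - aᵢ e₀`.
-/

/-- `a d n` is the number of subgroups of `ℤ^d` of index exactly `n`. -/
noncomputable def subgroupCount (d n : ℕ) : ℕ :=
  Nat.card {H : AddSubgroup (Fin d → ℤ) // H.index = n}

open Function

namespace AddSubgroup

variable {M : Type*} [AddCommGroup M]

theorem range_nsmul_le_of_index_eq {H : AddSubgroup M} {n : ℕ} (h : H.index = n) :
    (nsmulAddMonoidHom (α := M) n).range ≤ H := by
  rintro _ ⟨x, rfl⟩
  simpa [← h] using H.nsmul_index_mem x

theorem finite_index_eq (n : ℕ) [(nsmulAddMonoidHom (α := M) n).range.FiniteIndex] :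
    Finite {H : AddSubgroup M // H.index = n} := by
  let π := QuotientAddGroup.mk' (nsmulAddMonoidHom (α := M) n).range
  have ker_le (H : {H : AddSubgroup M // H.index = n}) : π.ker ≤ H.1 := by
    rw [QuotientAddGroup.ker_mk']
    exact range_nsmul_le_of_index_eq H.2
  refine Finite.of_injective (fun H ↦ H.1.map π) fun H K hHK ↦ Subtype.ext ?_
  rw [← comap_map_eq_self (ker_le H), ← comap_map_eq_self (ker_le K)]
  exact congrArg (comap π) hHK

theorem finiteIndex_range_nsmul [Module.Free ℤ M] [Module.Finite ℤ M] {n : ℕ} (hn : n ≠ 0) :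
    (nsmulAddMonoidHom (α := M) n).range.FiniteIndex :=
  ⟨by rw [index_range_nsmul]; exact pow_ne_zero _ hn⟩

end AddSubgroup

section DotProductMod

variable {ι : Type*} [Fintype ι] (n : ℕ)

def dotProductMod (c : ι → ZMod n) : (ι → ℤ) →+ ZMod n :=
  AddMonoidHom.mk' (fun x ↦ ∑ i, c i * x i) fun x y ↦ by
    simp [mul_add, Finset.sum_add_distrib]

variable {n} [DecidableEq ι] {c c' : ι → ZMod n} {i₀ : ι}

theorem dotProductMod_single (c : ι → ZMod n) (j : ι) (t : ℤ) :
    dotProductMod n c (Pi.single j t) = c j * t := by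
  simp [dotProductMod, Pi.single_apply]

theorem dotProductMod_surjective (hc : c i₀ = 1) : Surjective (dotProductMod n c) := by
  intro y
  obtain ⟨t, rfl⟩ := ZMod.intCast_surjective y
  exact ⟨Pi.single i₀ t, by rw [dotProductMod_single, hc, one_mul]⟩

theorem index_ker_dotProductMod (hc : c i₀ = 1) : (dotProductMod n c).ker.index = n := by
  rw [AddSubgroup.index_ker,
    (dotProductMod n c).range_eq_top_of_surjective (dotProductMod_surjective hc),
    AddSubgroup.card_top, Nat.card_zmod]

theorem eq_of_ker_dotProductMod_eq (hc : c i₀ = 1) (hc' : c' i₀ = 1)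
    (h : (dotProductMod n c).ker = (dotProductMod n c').ker) : c = c' := by
  funext j
  obtain ⟨t, ht⟩ := ZMod.intCast_surjective (c j)
  have hmem : Pi.single j 1 - Pi.single i₀ t ∈ (dotProductMod n c).ker := by
    simp [dotProductMod_single, hc, ht]
  rw [h, AddMonoidHom.mem_ker, map_sub, dotProductMod_single, dotProductMod_single, hc', ht]
    at hmem
  simpa [sub_eq_zero, eq_comm] using hmem

end DotProductMod

theorem injective_ker_dotProductMod_cons (n m : ℕ) :
    Injective fun a : Fin m → ZMod n ↦
      (⟨(dotProductMod n (Fin.cons 1 a)).ker, index_ker_dotProductMod (i₀ := 0) rfl⟩ :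
        {H : AddSubgroup (Fin (m + 1) → ℤ) // H.index = n}) :=
  fun _ _ h ↦ Fin.cons_right_injective _ <|
    eq_of_ker_dotProductMod_eq (i₀ := 0) rfl rfl (congrArg Subtype.val h)

/-- For `n ≥ 1` and `d ≥ 1`, the number of index-`n` subgroups of `ℤ^d`
is at least `n^{d-1}`. -/
theorem subgroupCount_lower_bound (n d : ℕ) (hn : 1 ≤ n) (hd : 1 ≤ d) :
    n ^ (d - 1) ≤ subgroupCount d n := by
  obtain ⟨m, rfl⟩ := Nat.exists_eq_add_of_le' hd
  have := AddSubgroup.finiteIndex_range_nsmul (M := Fin (m + 1) → ℤ) (n := n) (by omega)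
  have := AddSubgroup.finite_index_eq (M := Fin (m + 1) → ℤ) n
  calc n ^ (m + 1 - 1) = Nat.card (Fin m → ZMod n) := by simp [Nat.card_fun]
    _ ≤ subgroupCount (m + 1) n :=
      Nat.card_le_card_of_injective _ (injective_ker_dotProductMod_cons n m)
end

section
/- For all integers d ≥ 2 and n ≥ 2, the number of subgroups of ℤ^d of index n satisfies a_n(ℤ^d) ≤ 3^d n^{d-1} (log n)^{d-1}. -/
/-!
A subgroup `H ≤ ℤ × A` of index `n` is determined by `K = H ∩ ({0} × A)`, a subgroup of `A` of
some index `m ∣ n`, together with one coset of `K` in `A`: the projection of `H` to `ℤ` is `cℤ`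
with `c = n / m`, and the second coordinates of the elements of `H` over `c` form a coset of `K`.
Hence `a_n(ℤ × A) ≤ ∑_{m ∣ n} m a_m(A)`. Since `∑_{m ∣ n} m = ∑_{d ∣ n} n / d ≤ n (1 + log n)`,
induction on the rank gives `a_n(ℤ^(e+1)) ≤ n^e (1 + log n)^e`, and `1 + log n ≤ 3 log n`
for `n ≥ 2` because `log 2 > 1/2`.
-/

open AddSubgroup

abbrev SubgroupsOfIndex (G : Type*) [AddGroup G] (n : ℕ) : Type _ :=
  {H : AddSubgroup G // H.index = n}

def AddEquiv.subgroupsOfIndexEquiv {G G' : Type*} [AddGroup G] [AddGroup G'] (σ : G ≃+ G')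
    (n : ℕ) : SubgroupsOfIndex G n ≃ SubgroupsOfIndex G' n :=
  σ.mapAddSubgroup.toEquiv.subtypeEquiv fun H => by
    simp [AddSubgroup.index_map_equiv]

theorem Int.addSubgroup_eq_zmultiples_of_index_eq {H : AddSubgroup ℤ} {n : ℕ} (h : H.index = n) :
    H = zmultiples (n : ℤ) := by
  obtain ⟨a, rfl⟩ := Int.subgroup_cyclic H
  rw [← zmultiples_eq_closure, Int.index_zmultiples] at *
  rw [← h, Int.zmultiples_natAbs]

theorem Int.subsingleton_subgroupsOfIndex (n : ℕ) : Subsingleton (SubgroupsOfIndex ℤ n) :=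
  ⟨fun H₁ H₂ => Subtype.ext <| (Int.addSubgroup_eq_zmultiples_of_index_eq H₁.2).trans
    (Int.addSubgroup_eq_zmultiples_of_index_eq H₂.2).symm⟩

namespace AddSubgroup

variable {A : Type*} [AddCommGroup A]

def zeroSlice (H : AddSubgroup (ℤ × A)) : AddSubgroup A :=
  H.comap (AddMonoidHom.inr ℤ A)

noncomputable def fstIndex (H : AddSubgroup (ℤ × A)) : ℕ :=
  (H.map (AddMonoidHom.fst ℤ A)).index

theorem zeroSlice_index_mul_fstIndex (H : AddSubgroup (ℤ × A)) :
    (zeroSlice H).index * fstIndex H = H.index := by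
  have range_inr : (AddMonoidHom.inr ℤ A).range = (AddMonoidHom.fst ℤ A).ker := by
    ext ⟨z, a⟩
    simp [Prod.ext_iff, eq_comm, mem_prod]
  have hfst : fstIndex H = (H ⊔ (AddMonoidHom.fst ℤ A).ker).index := by
    rw [fstIndex, index_map, AddMonoidHom.range_eq_top_of_surjective _ Prod.fst_surjective,
      index_top, mul_one]
  rw [hfst, zeroSlice, index_comap, range_inr, ← relIndex_sup_left,
    relIndex_mul_index le_sup_left]

theorem map_fst_eq_zmultiples (H : AddSubgroup (ℤ × A)) :
    H.map (AddMonoidHom.fst ℤ A) = zmultiples (fstIndex H : ℤ) :=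
  Int.addSubgroup_eq_zmultiples_of_index_eq rfl

theorem exists_fstIndex_mem (H : AddSubgroup (ℤ × A)) : ∃ a : A, ((fstIndex H : ℤ), a) ∈ H := by
  obtain ⟨⟨z, a⟩, ha, rfl⟩ : (fstIndex H : ℤ) ∈ H.map (AddMonoidHom.fst ℤ A) := by
    rw [map_fst_eq_zmultiples]
    exact mem_zmultiples _
  exact ⟨a, ha⟩

theorem mk_mem_of_sub_mem_zeroSlice {H : AddSubgroup (ℤ × A)} {z : ℤ} {a b : A}
    (hb : (z, b) ∈ H) (hab : a - b ∈ zeroSlice H) : (z, a) ∈ H := by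
  simpa using add_mem hb hab

theorem le_of_zeroSlice_le {H₁ H₂ : AddSubgroup (ℤ × A)} (hK : zeroSlice H₁ ≤ zeroSlice H₂)
    {a : A} (h₁ : ((fstIndex H₁ : ℤ), a) ∈ H₁) (h₂ : ((fstIndex H₁ : ℤ), a) ∈ H₂) : H₁ ≤ H₂ := by
  intro x hx
  obtain ⟨k, hk⟩ : x.1 ∈ zmultiples (fstIndex H₁ : ℤ) := by
    rw [← map_fst_eq_zmultiples]
    exact mem_map_of_mem _ hx
  have smul_mem : ∀ {H : AddSubgroup (ℤ × A)}, ((fstIndex H₁ : ℤ), a) ∈ H → (x.1, k • a) ∈ H :=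
    fun h => by simpa [← hk] using zsmul_mem h k
  have hx₁ : x.2 - k • a ∈ zeroSlice H₁ := by
    have hsub : x - (x.1, k • a) = AddMonoidHom.inr ℤ A (x.2 - k • a) := by ext <;> simp
    rw [zeroSlice, mem_comap, ← hsub]
    exact sub_mem hx (smul_mem h₁)
  simpa using mk_mem_of_sub_mem_zeroSlice (smul_mem h₂) (hK hx₁)

theorem eq_of_zeroSlice_eq {H₁ H₂ : AddSubgroup (ℤ × A)} (hidx : H₁.index = H₂.index)
    (hn : H₁.index ≠ 0) (hK : zeroSlice H₁ = zeroSlice H₂) {a₁ a₂ : A}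
    (h₁ : ((fstIndex H₁ : ℤ), a₁) ∈ H₁) (h₂ : ((fstIndex H₂ : ℤ), a₂) ∈ H₂)
    (h : a₁ - a₂ ∈ zeroSlice H₂) : H₁ = H₂ := by
  have hc : fstIndex H₁ = fstIndex H₂ := by
    have hK₀ : (zeroSlice H₁).index ≠ 0 := fun h₀ =>
      hn (by rw [← zeroSlice_index_mul_fstIndex, h₀, zero_mul])
    apply Nat.eq_of_mul_eq_mul_left (Nat.pos_of_ne_zero hK₀)
    rw [zeroSlice_index_mul_fstIndex, hK, zeroSlice_index_mul_fstIndex, hidx]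
  have h₁₂ : ((fstIndex H₁ : ℤ), a₁) ∈ H₂ := hc ▸ mk_mem_of_sub_mem_zeroSlice h₂ h
  have h₂₁ : ((fstIndex H₂ : ℤ), a₂) ∈ H₁ := by
    rw [← hc]
    refine mk_mem_of_sub_mem_zeroSlice h₁ ?_
    rw [hK, ← neg_sub]
    exact neg_mem h
  exact le_antisymm (le_of_zeroSlice_le hK.le h₁ h₁₂) (le_of_zeroSlice_le hK.ge h₂ h₂₁)

theorem exists_injective_sigma_quotient {n : ℕ} (hn : n ≠ 0) :
    ∃ f : SubgroupsOfIndex (ℤ × A) n → Σ m : n.divisors, Σ K : SubgroupsOfIndex A m, A ⧸ K.1,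
      Function.Injective f := by
  choose a ha using fun H : SubgroupsOfIndex (ℤ × A) n => exists_fstIndex_mem H.1
  have hdvd (H : SubgroupsOfIndex (ℤ × A) n) : (zeroSlice H.1).index ∈ n.divisors :=
    Nat.mem_divisors.mpr ⟨⟨fstIndex H.1, by rw [zeroSlice_index_mul_fstIndex, H.2]⟩, hn⟩
  refine ⟨fun H => ⟨⟨_, hdvd H⟩, ⟨zeroSlice H.1, rfl⟩, a H⟩, fun H₁ H₂ h => ?_⟩
  have hK : zeroSlice H₁.1 = zeroSlice H₂.1 := congrArg (fun x => x.2.1.1) h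
  -- comparing cosets as sets avoids a heterogeneous equality between the two quotients
  have hcoset := congrArg (fun x : Σ m : n.divisors, Σ K : SubgroupsOfIndex A m, A ⧸ K.1 =>
    {b : A | (b : A ⧸ x.2.1.1) = x.2.2}) h
  have hsub : a H₁ - a H₂ ∈ zeroSlice H₂.1 :=
    QuotientAddGroup.eq_iff_sub_mem.mp ((Set.ext_iff.mp hcoset (a H₁)).mp rfl)
  exact Subtype.ext
    (eq_of_zeroSlice_eq (H₁.2.trans H₂.2.symm) (H₁.2.trans_ne hn) hK (ha H₁) (ha H₂) hsub)

instance {n : ℕ} (m : n.divisors) (K : SubgroupsOfIndex A m) : Finite (A ⧸ K.1) :=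
  have : K.1.FiniteIndex := ⟨K.2.trans_ne (Nat.pos_of_mem_divisors m.2).ne'⟩
  K.1.finite_quotient_of_finiteIndex

theorem finite_subgroupsOfIndex_int_prod {n : ℕ} (hn : n ≠ 0)
    (hA : ∀ m ∈ n.divisors, Finite (SubgroupsOfIndex A m)) :
    Finite (SubgroupsOfIndex (ℤ × A) n) :=
  have := fun m : n.divisors => hA m m.2
  have ⟨_, hf⟩ := exists_injective_sigma_quotient (A := A) hn
  Finite.of_injective _ hf

theorem card_subgroupsOfIndex_int_prod_le {n : ℕ} (hn : n ≠ 0)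
    (hA : ∀ m ∈ n.divisors, Finite (SubgroupsOfIndex A m)) :
    Nat.card (SubgroupsOfIndex (ℤ × A) n) ≤
      ∑ m ∈ n.divisors, m * Nat.card (SubgroupsOfIndex A m) := by
  have := fun m : n.divisors => hA m m.2
  obtain ⟨f, hf⟩ := exists_injective_sigma_quotient (A := A) hn
  have hfiber (m : n.divisors) :
      Nat.card (Σ K : SubgroupsOfIndex A m, A ⧸ K.1) = m * Nat.card (SubgroupsOfIndex A m) := by
    have := Fintype.ofFinite (SubgroupsOfIndex A m)
    rw [Nat.card_sigma, Nat.card_eq_fintype_card, mul_comm]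
    exact Finset.sum_const_nat fun (K : SubgroupsOfIndex A m) _ => K.2
  calc Nat.card (SubgroupsOfIndex (ℤ × A) n)
      ≤ Nat.card (Σ m : n.divisors, Σ K : SubgroupsOfIndex A m, A ⧸ K.1) :=
        Nat.card_le_card_of_injective f hf
    _ = ∑ m ∈ n.divisors, m * Nat.card (SubgroupsOfIndex A m) := by
        rw [Nat.card_sigma]
        simp only [hfiber]
        exact Finset.sum_coe_sort n.divisors fun m => m * Nat.card (SubgroupsOfIndex A m)

end AddSubgroup

theorem Nat.sum_divisors_le_mul_one_add_log (n : ℕ) :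
    ∑ m ∈ n.divisors, (m : ℝ) ≤ n * (1 + Real.log n) := by
  calc ∑ m ∈ n.divisors, (m : ℝ)
      = ∑ d ∈ n.divisors, ((n / d : ℕ) : ℝ) := (Nat.sum_div_divisors n _).symm
    _ = n * ∑ d ∈ n.divisors, (d : ℝ)⁻¹ := by
        rw [Finset.mul_sum]
        refine Finset.sum_congr rfl fun d hd => ?_
        rw [Nat.cast_div (Nat.dvd_of_mem_divisors hd)
          (Nat.cast_ne_zero.mpr (Nat.pos_of_mem_divisors hd).ne'), div_eq_mul_inv]
    _ ≤ n * ∑ d ∈ Finset.Icc 1 n, (d : ℝ)⁻¹ := by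
        gcongr
        intro d hd
        exact Finset.mem_Icc.mpr ⟨Nat.pos_of_mem_divisors hd, Nat.divisor_le hd⟩
    _ = n * harmonic n := by simp [harmonic_eq_sum_Icc]
    _ ≤ n * (1 + Real.log n) := by gcongr; exact harmonic_le_one_add_log n

theorem finite_subgroupsOfIndex_pi (d : ℕ) {n : ℕ} (hn : n ≠ 0) :
    Finite (SubgroupsOfIndex (Fin d → ℤ) n) := by
  induction d generalizing n with
  | zero => infer_instance
  | succ d ih =>
    have := AddSubgroup.finite_subgroupsOfIndex_int_prod (A := Fin d → ℤ) hn
      fun m hm => ih (Nat.pos_of_mem_divisors hm).ne'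
    exact .of_equiv _ ((Fin.consLinearEquiv ℤ fun _ : Fin (d + 1) => ℤ).toAddEquiv
      |>.subgroupsOfIndexEquiv n)

theorem card_subgroupsOfIndex_pi_succ_le (e : ℕ) {n : ℕ} (hn : n ≠ 0) :
    (Nat.card (SubgroupsOfIndex (Fin (e + 1) → ℤ) n) : ℝ) ≤ n ^ e * (1 + Real.log n) ^ e := by
  induction e generalizing n with
  | zero =>
    have := Int.subsingleton_subgroupsOfIndex n
    have := ((AddEquiv.funUnique (Fin 1) ℤ).subgroupsOfIndexEquiv n).subsingleton
    rw [pow_zero, pow_zero, mul_one]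
    exact_mod_cast Finite.card_le_one_iff_subsingleton.mpr this
  | succ e ih =>
    have hbound (m : ℕ) (hm : m ∈ n.divisors) :
        (Nat.card (SubgroupsOfIndex (Fin (e + 1) → ℤ) m) : ℝ) ≤ n ^ e * (1 + Real.log n) ^ e := by
      have hm₁ : (1 : ℝ) ≤ m := by exact_mod_cast Nat.pos_of_mem_divisors hm
      have hmn : (m : ℝ) ≤ n := by exact_mod_cast Nat.divisor_le hm
      refine (ih (Nat.pos_of_mem_divisors hm).ne').trans ?_
      have := Real.log_nonneg hm₁
      gcongr
    have hcard := AddSubgroup.card_subgroupsOfIndex_int_prod_le (A := Fin (e + 1) → ℤ) hn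
      fun m hm => finite_subgroupsOfIndex_pi _ (Nat.pos_of_mem_divisors hm).ne'
    have hlog : 0 ≤ 1 + Real.log n := by
      have := Real.log_nonneg (by exact_mod_cast Nat.one_le_iff_ne_zero.mpr hn : (1 : ℝ) ≤ n)
      linarith
    rw [← Nat.card_congr ((Fin.consLinearEquiv ℤ fun _ : Fin (e + 2) => ℤ).toAddEquiv
      |>.subgroupsOfIndexEquiv n)]
    calc (Nat.card (SubgroupsOfIndex (ℤ × (Fin (e + 1) → ℤ)) n) : ℝ)
        ≤ ∑ m ∈ n.divisors, (m : ℝ) * Nat.card (SubgroupsOfIndex (Fin (e + 1) → ℤ) m) := by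
          exact_mod_cast hcard
      _ ≤ ∑ m ∈ n.divisors, (m : ℝ) * (n ^ e * (1 + Real.log n) ^ e) := by
          gcongr with m hm
          exact hbound m hm
      _ = n ^ e * (1 + Real.log n) ^ e * ∑ m ∈ n.divisors, (m : ℝ) := by
          rw [Finset.mul_sum]
          exact Finset.sum_congr rfl fun m _ => mul_comm _ _
      _ ≤ n ^ e * (1 + Real.log n) ^ e * (n * (1 + Real.log n)) := by
          gcongr
          exact Nat.sum_divisors_le_mul_one_add_log n
      _ = n ^ (e + 1) * (1 + Real.log n) ^ (e + 1) := by ring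

/-- For `d ≥ 2` and `n ≥ 2`, `a_n(ℤ^d) ≤ 3^d n^{d-1} (log n)^{d-1}`. -/
theorem subgroupCount_upper_bound (d n : ℕ) (hd : 2 ≤ d) (hn : 2 ≤ n) :
    (subgroupCount d n : ℝ) ≤ 3 ^ d * n ^ (d - 1) * Real.log n ^ (d - 1) := by
  obtain ⟨e, rfl⟩ : ∃ e, d = e + 1 := ⟨d - 1, by omega⟩
  have hlog₂ : Real.log 2 ≤ Real.log n := Real.log_le_log (by norm_num) (by exact_mod_cast hn)
  have hlog₀ : 0 ≤ Real.log n := by linarith [Real.log_two_gt_d9]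
  have hlog : 1 + Real.log n ≤ 3 * Real.log n := by linarith [Real.log_two_gt_d9]
  calc (subgroupCount (e + 1) n : ℝ)
      ≤ n ^ e * (1 + Real.log n) ^ e := card_subgroupsOfIndex_pi_succ_le e (by omega)
    _ ≤ n ^ e * (3 * Real.log n) ^ e := by gcongr
    _ = 3 ^ e * n ^ e * Real.log n ^ e := by ring
    _ ≤ 3 ^ (e + 1) * n ^ (e + 1 - 1) * Real.log n ^ (e + 1 - 1) := by
        rw [Nat.add_sub_cancel]
        gcongr
        · norm_num
        · omega
end

section
/- Let b ≥ 2 and d ≥ 2 be integers and let T be the full ℤ^d-shift on an alphabet of b symbols. Then the dynamical Mertens sum M_T(N) = ∑_{τ closed orbit, |τ| ≤ N} b^{-|τ|} satisfies M_T(N) = ∑_{n=1}^{N} a_n(ℤ^d)/n + O(1), where a_n(ℤ^d) is the number of subgroups of ℤ^d of index n. -/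
/-- The full `ℤ^d`-shift on `b` symbols: `(T_g x)_h = x_{g+h}`. -/
def fullShift (d b : ℕ) (g : Fin d → ℤ) (x : (Fin d → ℤ) → Fin b) :
    (Fin d → ℤ) → Fin b :=
  fun h => x (g + h)

/-- A closed orbit of the full `ℤ^d`-shift is a finite orbit of the action. -/
def IsClosedOrbit (d b : ℕ) (τ : Set ((Fin d → ℤ) → Fin b)) : Prop :=
  (∃ x, τ = {y | ∃ g, y = fullShift d b g x}) ∧ τ.Finite

/-- The dynamical Mertens sum `M_T(N) = ∑_{|τ| ≤ N} b^{-|τ|}` over closed orbits `τ`. -/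
noncomputable def mertensSum (d b N : ℕ) : ℝ :=
  ∑ᶠ τ ∈ {τ : Set ((Fin d → ℤ) → Fin b) | IsClosedOrbit d b τ ∧ Nat.card τ ≤ N},
    ((b : ℝ))⁻¹ ^ (Nat.card τ)

/-!
A point whose stabilizer has index `n` has an orbit of size `n`, so
`M_T(N) = ∑_{n ≤ N} p_n b^{-n} / n`, where `p_n` counts the points whose stabilizer has
index `n`. The points fixed by a subgroup `L` of index `n` are the `b^n` functions on `ℤ^d / L`;
those whose stabilizer is strictly larger than `L` are fixed by one of the proper supergroups of
`L`, of which there are at most `n^d` (every subgroup of `ℤ^d` is generated by `d` elements, so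
the subgroups above `L` inject into `(ℤ^d / L)^d`), each of index at most `n / 2`. Hence
`0 ≤ a_n b^n - p_n ≤ a_n n^d b^{n/2}`, and as `a_n ≤ n^{d²}` the difference of the two sums is
dominated by the convergent series `∑ n^{d² + d} b^{-n/2}`.
-/

open Function AddAction

theorem Submodule.exists_linearMap_range_eq {R : Type*} [CommRing R] [IsDomain R]
    [IsPrincipalIdealRing R] {d : ℕ} (N : Submodule R (Fin d → R)) :
    ∃ f : (Fin d → R) →ₗ[R] (Fin d → R), LinearMap.range f = N := by
  obtain ⟨k, bN⟩ := Submodule.basisOfPid (Pi.basisFun R (Fin d)) N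
  have hk : k ≤ d := by
    simpa using (Module.finrank_eq_card_basis bN).symm.trans_le (Submodule.finrank_le N)
  refine ⟨N.subtype ∘ₗ bN.equivFun.symm.toLinearMap ∘ₗ LinearMap.funLeft R R (Fin.castLE hk), ?_⟩
  rw [LinearMap.range_comp_of_range_eq_top _ (LinearMap.range_eq_top.mpr ?_),
    Submodule.range_subtype]
  exact bN.equivFun.symm.surjective.comp
    (LinearMap.funLeft_surjective_of_injective _ _ _ (Fin.castLE_injective hk))

theorem Submodule.exists_injective_Ici_pi_quotient {R : Type*} [CommRing R] [IsDomain R]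
    [IsPrincipalIdealRing R] {d : ℕ} (N : Submodule R (Fin d → R)) :
    ∃ F : Set.Ici N → (Fin d → (Fin d → R) ⧸ N), Injective F := by
  choose f hf using fun P : Submodule R (Fin d → R) => P.exists_linearMap_range_eq
  refine ⟨fun P => LinearEquiv.piRing R _ _ R (N.mkQ ∘ₗ f P), fun P P' h => Subtype.ext ?_⟩
  have h' := congrArg (fun φ => Submodule.comap N.mkQ (LinearMap.range φ))
    ((LinearEquiv.piRing R _ _ R).injective h)
  simpa only [LinearMap.range_comp, hf, Submodule.comap_map_mkQ,
    sup_eq_right.mpr (Set.mem_Ici.mp P.2), sup_eq_right.mpr (Set.mem_Ici.mp P'.2)] using h'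

theorem AddSubgroup.two_mul_index_le_of_lt {G : Type*} [AddGroup G] {H L : AddSubgroup G}
    (h : L < H) (hL : L.index ≠ 0) : 2 * H.index ≤ L.index := by
  have : L.FiniteIndex := ⟨hL⟩
  have hlt := AddSubgroup.index_strictAnti h
  obtain ⟨k, hk⟩ := AddSubgroup.index_dvd_of_le h.le
  rcases k with _ | _ | k
  · simp_all
  · simp_all
  · rw [hk]; nlinarith

theorem AddAction.ncard_image_orbit_mul {G X : Type*} [AddGroup G] [AddAction G X] {n : ℕ}
    (hn : n ≠ 0) (hs : {x : X | (orbit G x).ncard = n}.Finite) :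
    (orbit G '' {x : X | (orbit G x).ncard = n}).ncard * n =
      {x : X | (orbit G x).ncard = n}.ncard := by
  set s := {x : X | (orbit G x).ncard = n}
  have hs_eq : s = ⋃ τ ∈ orbit G '' s, τ := by
    ext x
    rw [Set.biUnion_image, Set.mem_iUnion₂]
    refine ⟨fun hx => ⟨x, hx, mem_orbit_self x⟩, ?_⟩
    rintro ⟨y, hy, hxy⟩
    show (orbit G x).ncard = n
    rwa [orbit_eq_iff.mpr hxy]
  have hdisj : (orbit G '' s).PairwiseDisjoint id :=
    (orbit.pairwiseDisjoint (G := G)).subset (Set.image_subset_range _ _)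
  have hfin : ∀ τ ∈ orbit G '' s, τ.Finite := by
    rintro _ ⟨x, hx, rfl⟩
    exact Set.finite_of_ncard_ne_zero (hx.symm ▸ hn)
  conv_rhs => rw [hs_eq]
  rw [(hs.image _).ncard_biUnion hfin hdisj, ← finsum_one, finsum_mem_mul]
  refine finsum_mem_congr rfl ?_
  rintro _ ⟨x, hx, rfl⟩
  exact (one_mul n).trans hx.symm

theorem Real.pow_div_two_mul_inv_pow_le {x : ℝ} (hx : 1 ≤ x) (n : ℕ) :
    x ^ (n / 2) * x⁻¹ ^ n ≤ (√x)⁻¹ ^ n := by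
  have hs : 1 ≤ √x := Real.one_le_sqrt.mpr hx
  calc x ^ (n / 2) * x⁻¹ ^ n = √x ^ (2 * (n / 2)) * x⁻¹ ^ n := by
        rw [pow_mul, Real.sq_sqrt (by linarith)]
    _ ≤ √x ^ n * x⁻¹ ^ n := by
        gcongr ?_ * _
        exact pow_le_pow_right₀ hs (Nat.mul_div_le n 2)
    _ = (√x)⁻¹ ^ n := by
        rw [← mul_pow, ← Real.sq_sqrt (zero_le_one.trans hx), Real.sqrt_sq (by positivity)]
        field_simp

-- Only a local instance: for `B = G` it would clash with the pointwise action on `G → G`.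
-- For `G = Fin d → ℤ` and `B = Fin b`, `g +ᵥ x` is `fullShift d b g x` by definition.
abbrev shiftAction (G B : Type*) [AddCommGroup G] : AddAction G (G → B) where
  vadd g x h := x (g + h)
  zero_vadd x := funext fun h => congrArg x (zero_add h)
  add_vadd g g' x := funext fun h => congrArg x (by abel)

attribute [local instance] shiftAction

section Shift

variable {G B : Type*} [AddCommGroup G]

theorem shift_vadd_apply (g : G) (x : G → B) (h : G) : (g +ᵥ x) h = x (g + h) := rfl

def fixedPointsShiftEquiv (L : AddSubgroup G) :
    {x : G → B | L ≤ stabilizer G x} ≃ (G ⧸ L → B) where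
  toFun x := Quotient.lift x.1 fun a c hac => by
    have := congrFun (x.2 (QuotientAddGroup.leftRel_apply.mp hac)) a
    rwa [shift_vadd_apply, neg_add_cancel_comm, eq_comm] at this
  invFun y := ⟨y ∘ (↑), fun l hl => funext fun h =>
    congrArg y (QuotientAddGroup.eq.mpr (by simpa [neg_add_cancel_comm] using L.neg_mem hl))⟩
  left_inv _ := rfl
  right_inv y := funext fun q => Quotient.inductionOn' q fun _ => rfl

theorem ncard_setOf_le_stabilizer {L : AddSubgroup G} (hL : L.index ≠ 0) :
    {x : G → B | L ≤ stabilizer G x}.ncard = Nat.card B ^ L.index := by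
  have : Finite (G ⧸ L) := AddSubgroup.index_ne_zero_iff_finite.mp hL
  rw [← Nat.card_coe_set_eq, Nat.card_congr (fixedPointsShiftEquiv L), Nat.card_fun]
  rfl

theorem finite_setOf_le_stabilizer [Finite B] {L : AddSubgroup G} (hL : L.index ≠ 0) :
    {x : G → B | L ≤ stabilizer G x}.Finite := by
  have : Finite (G ⧸ L) := AddSubgroup.index_ne_zero_iff_finite.mp hL
  exact Set.finite_coe_iff.mp (Finite.of_equiv _ (fixedPointsShiftEquiv L).symm)

theorem ncard_stabilizer_eq_add_ncard_lt [Finite B] {L : AddSubgroup G} (hL : L.index ≠ 0) :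
    {x : G → B | stabilizer G x = L}.ncard + {x : G → B | L < stabilizer G x}.ncard =
      Nat.card B ^ L.index := by
  have hfin := finite_setOf_le_stabilizer (B := B) hL
  rw [← ncard_setOf_le_stabilizer hL, ← Set.ncard_union_eq
    (Set.disjoint_left.mpr fun x h1 h2 => (Set.mem_ofPred.mp h2).ne (Set.mem_ofPred.mp h1).symm)
    (hfin.subset fun x hx => Set.mem_ofPred.mpr (Set.mem_ofPred.mp hx).ge)
    (hfin.subset fun x hx => Set.mem_ofPred.mpr (Set.mem_ofPred.mp hx).le)]
  congr 1
  ext x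
  simp [le_iff_eq_or_lt, eq_comm]

end Shift

section Lattice

variable {d : ℕ}

local notation "ℤᵈ" => Fin d → ℤ

namespace AddSubgroup

theorem exists_injective_Ici_pi_quotient (L : AddSubgroup ℤᵈ) :
    ∃ F : Set.Ici L → (Fin d → ℤᵈ ⧸ L), Injective F := by
  obtain ⟨F, hF⟩ := L.toIntSubmodule.exists_injective_Ici_pi_quotient
  let e : Set.Ici L ≃ Set.Ici L.toIntSubmodule :=
    AddSubgroup.toIntSubmodule.toEquiv.subtypeEquiv fun H => by simp
  exact ⟨F ∘ e, hF.comp e.injective⟩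

theorem finite_Ici {L : AddSubgroup ℤᵈ} (hL : L.index ≠ 0) : (Set.Ici L).Finite := by
  have : Finite (ℤᵈ ⧸ L) := index_ne_zero_iff_finite.mp hL
  obtain ⟨F, hF⟩ := L.exists_injective_Ici_pi_quotient
  exact Set.finite_coe_iff.mp (Finite.of_injective F hF)

theorem ncard_Ici_le {L : AddSubgroup ℤᵈ} (hL : L.index ≠ 0) :
    (Set.Ici L).ncard ≤ L.index ^ d := by
  have : Finite (ℤᵈ ⧸ L) := index_ne_zero_iff_finite.mp hL
  obtain ⟨F, hF⟩ := L.exists_injective_Ici_pi_quotient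
  rw [← Nat.card_coe_set_eq]
  simpa [index, Nat.card_fun] using Nat.card_le_card_of_injective F hF

theorem pi_zmultiples_index_le (H : AddSubgroup ℤᵈ) :
    pi Set.univ (fun _ => zmultiples (H.index : ℤ)) ≤ H := by
  intro g hg
  choose k hk using fun i => mem_zmultiples_iff.mp (hg i (Set.mem_univ i))
  have : g = H.index • k := funext fun i => by simp [← hk i, mul_comm]
  exact this ▸ H.nsmul_index_mem k

theorem index_pi_zmultiples (n : ℕ) :
    (pi Set.univ fun _ : Fin d => zmultiples (n : ℤ)).index = n ^ d := by
  simp [Int.index_zmultiples]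

theorem finite_setOf_index_eq {n : ℕ} (hn : n ≠ 0) :
    {H : AddSubgroup ℤᵈ | H.index = n}.Finite :=
  (finite_Ici (by rw [index_pi_zmultiples]; exact pow_ne_zero d hn)).subset
    fun H hH => hH ▸ pi_zmultiples_index_le H

end AddSubgroup

theorem subgroupCount_eq_ncard (n : ℕ) :
    subgroupCount d n = {H : AddSubgroup ℤᵈ | H.index = n}.ncard :=
  Nat.card_coe_set_eq _

theorem subgroupCount_le {n : ℕ} (hn : n ≠ 0) : subgroupCount d n ≤ n ^ (d * d) := by
  have hK0 :
      (AddSubgroup.pi Set.univ fun _ : Fin d => AddSubgroup.zmultiples (n : ℤ)).index ≠ 0 := by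
    rw [AddSubgroup.index_pi_zmultiples]; exact pow_ne_zero d hn
  rw [subgroupCount_eq_ncard, pow_mul, ← AddSubgroup.index_pi_zmultiples n]
  exact (Set.ncard_le_ncard (fun H hH => hH ▸ AddSubgroup.pi_zmultiples_index_le H)
    (AddSubgroup.finite_Ici hK0)).trans (AddSubgroup.ncard_Ici_le hK0)

end Lattice

section FullShift

variable {d b : ℕ}

local notation "ℤᵈ" => Fin d → ℤ

theorem setOf_exists_eq_fullShift (x : ℤᵈ → Fin b) :
    {y | ∃ g, y = fullShift d b g x} = orbit ℤᵈ x :=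
  Set.ext fun _ => exists_congr fun _ => eq_comm

theorem finite_setOf_index_stabilizer_eq {n : ℕ} (hn : n ≠ 0) :
    {x : ℤᵈ → Fin b | (stabilizer ℤᵈ x).index = n}.Finite := by
  refine ((AddSubgroup.finite_setOf_index_eq hn).biUnion fun L hL =>
    finite_setOf_le_stabilizer (hL ▸ hn)).subset fun x hx => ?_
  exact Set.mem_biUnion hx (Set.mem_ofPred.mpr le_rfl)

theorem finite_image_orbit_setOf_ncard_orbit_eq {n : ℕ} (hn : n ≠ 0) :
    (orbit ℤᵈ '' {x : ℤᵈ → Fin b | (orbit ℤᵈ x).ncard = n}).Finite := by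
  refine Set.Finite.image _ ?_
  simpa only [← index_stabilizer] using finite_setOf_index_stabilizer_eq hn

theorem setOf_isClosedOrbit_card_le_eq_biUnion (N : ℕ) :
    {τ | IsClosedOrbit d b τ ∧ Nat.card τ ≤ N} = ⋃ n ∈ (Finset.Icc 1 N : Set ℕ),
      orbit ℤᵈ '' {x : ℤᵈ → Fin b | (orbit ℤᵈ x).ncard = n} := by
  ext τ
  simp only [IsClosedOrbit, setOf_exists_eq_fullShift, Nat.card_coe_set_eq, Set.mem_ofPred_eq,
    Set.mem_iUnion, Finset.coe_Icc, Set.mem_Icc, Set.mem_image, exists_prop]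
  constructor
  · rintro ⟨⟨⟨x, rfl⟩, hfin⟩, hN⟩
    exact ⟨_, ⟨(Set.ncard_pos hfin).mpr ⟨x, mem_orbit_self x⟩, hN⟩, x, rfl, rfl⟩
  · rintro ⟨n, ⟨h1, hN⟩, x, hx, rfl⟩
    exact ⟨⟨⟨x, rfl⟩, Set.finite_of_ncard_ne_zero (by omega)⟩, by omega⟩

theorem mertensSum_eq_sum_ncard_orbits (N : ℕ) :
    mertensSum d b N = ∑ n ∈ Finset.Icc 1 N,
      ((orbit ℤᵈ '' {x : ℤᵈ → Fin b | (orbit ℤᵈ x).ncard = n}).ncard : ℝ) * (b : ℝ)⁻¹ ^ n := by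
  set O : ℕ → Set (Set (ℤᵈ → Fin b)) :=
    fun n => orbit ℤᵈ '' {x | (orbit ℤᵈ x).ncard = n}
  have hO : ∀ n ∈ (Finset.Icc 1 N : Set ℕ), (O n).Finite := fun n hn =>
    finite_image_orbit_setOf_ncard_orbit_eq (Nat.one_le_iff_ne_zero.mp (Finset.mem_Icc.mp hn).1)
  have hdisj : (Finset.Icc 1 N : Set ℕ).PairwiseDisjoint O := by
    rintro m - n - hmn
    refine Set.disjoint_left.mpr ?_
    rintro _ ⟨x, hx, rfl⟩ ⟨y, hy, hxy⟩
    exact hmn (hx.symm.trans (hxy ▸ hy))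
  rw [mertensSum, setOf_isClosedOrbit_card_le_eq_biUnion,
    finsum_mem_biUnion hdisj (Finset.finite_toSet _) hO, finsum_mem_coe_finset]
  refine Finset.sum_congr rfl fun n hn => ?_
  rw [finsum_mem_eq_finite_toFinset_sum _ (hO n hn), Set.ncard_eq_toFinset_card _ (hO n hn),
    ← nsmul_eq_mul, ← Finset.sum_const]
  refine Finset.sum_congr rfl fun τ hτ => ?_
  obtain ⟨x, hx, rfl⟩ := (hO n hn).mem_toFinset.mp hτ
  rw [Nat.card_coe_set_eq, hx]

theorem ncard_image_orbit_mul_eq_ncard_setOf_index_stabilizer_eq {n : ℕ} (hn : n ≠ 0) :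
    (orbit ℤᵈ '' {x : ℤᵈ → Fin b | (orbit ℤᵈ x).ncard = n}).ncard * n =
      {x : ℤᵈ → Fin b | (stabilizer ℤᵈ x).index = n}.ncard := by
  have hfin := finite_setOf_index_stabilizer_eq (d := d) (b := b) hn
  simp only [index_stabilizer] at hfin ⊢
  exact ncard_image_orbit_mul hn hfin

theorem ncard_setOf_lt_stabilizer_le (hb : 0 < b) {L : AddSubgroup ℤᵈ}
    (hL : L.index ≠ 0) :
    {x : ℤᵈ → Fin b | L < stabilizer ℤᵈ x}.ncard ≤
      L.index ^ d * b ^ (L.index / 2) := by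
  have hfin : (Set.Ioi L).Finite := (AddSubgroup.finite_Ici hL).subset Set.Ioi_subset_Ici_self
  have hne : ∀ H ∈ hfin.toFinset, H.index ≠ 0 := fun H hH =>
    ne_zero_of_dvd_ne_zero hL (AddSubgroup.index_dvd_of_le (hfin.mem_toFinset.mp hH).le)
  calc {x : ℤᵈ → Fin b | L < stabilizer ℤᵈ x}.ncard
      ≤ (⋃ H ∈ hfin.toFinset, {x : ℤᵈ → Fin b | H ≤ stabilizer ℤᵈ x}).ncard :=
        Set.ncard_le_ncard
          (fun x hx => Set.mem_biUnion (hfin.mem_toFinset.mpr hx) (Set.mem_ofPred.mpr le_rfl))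
          (hfin.toFinset.finite_toSet.biUnion fun H hH => finite_setOf_le_stabilizer (hne H hH))
    _ ≤ ∑ H ∈ hfin.toFinset, {x : ℤᵈ → Fin b | H ≤ stabilizer ℤᵈ x}.ncard :=
        Finset.set_ncard_biUnion_le _ _
    _ ≤ ∑ H ∈ hfin.toFinset, b ^ (L.index / 2) := by
        refine Finset.sum_le_sum fun H hH => ?_
        have h2 := AddSubgroup.two_mul_index_le_of_lt (hfin.mem_toFinset.mp hH) hL
        rw [ncard_setOf_le_stabilizer (hne H hH), Nat.card_fin]
        exact Nat.pow_le_pow_right hb (by omega)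
    _ ≤ L.index ^ d * b ^ (L.index / 2) := by
        rw [Finset.sum_const, smul_eq_mul, ← Set.ncard_eq_toFinset_card _ hfin]
        exact Nat.mul_le_mul_right _ ((Set.ncard_le_ncard Set.Ioi_subset_Ici_self
          (AddSubgroup.finite_Ici hL)).trans (AddSubgroup.ncard_Ici_le hL))

theorem subgroupCount_mul_pow_eq {n : ℕ} (hn : n ≠ 0) :
    subgroupCount d n * b ^ n =
      {x : ℤᵈ → Fin b | (stabilizer ℤᵈ x).index = n}.ncard +
        ∑ᶠ L ∈ {L : AddSubgroup ℤᵈ | L.index = n},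
          {x : ℤᵈ → Fin b | L < stabilizer ℤᵈ x}.ncard := by
  have hI := AddSubgroup.finite_setOf_index_eq (d := d) hn
  have hP : {x : ℤᵈ → Fin b | (stabilizer ℤᵈ x).index = n} =
      ⋃ L ∈ {L : AddSubgroup ℤᵈ | L.index = n}, {x | stabilizer ℤᵈ x = L} := by
    ext x
    simp
  have hdisj : {L : AddSubgroup ℤᵈ | L.index = n}.PairwiseDisjoint
      fun L => {x : ℤᵈ → Fin b | stabilizer ℤᵈ x = L} :=
    fun L _ L' _ hLL' => Set.disjoint_left.mpr fun x h h' =>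
      hLL' ((Set.mem_ofPred.mp h).symm.trans (Set.mem_ofPred.mp h'))
  rw [hP, hI.ncard_biUnion (fun L hL => ?_) hdisj, ← finsum_mem_add_distrib hI,
    subgroupCount_eq_ncard, ← finsum_one, finsum_mem_mul]
  · refine finsum_mem_congr rfl fun L hL => ?_
    rw [one_mul, ncard_stabilizer_eq_add_ncard_lt (hL ▸ hn), Nat.card_fin, Set.mem_ofPred.mp hL]
  · exact (finite_setOf_le_stabilizer (hL ▸ hn)).subset fun x hx => (Set.mem_ofPred.mp hx).ge

theorem subgroupCount_mul_pow_le (hb : 0 < b) {n : ℕ} (hn : n ≠ 0) :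
    subgroupCount d n * b ^ n ≤
      {x : ℤᵈ → Fin b | (stabilizer ℤᵈ x).index = n}.ncard +
        subgroupCount d n * (n ^ d * b ^ (n / 2)) := by
  have hI := AddSubgroup.finite_setOf_index_eq (d := d) hn
  rw [subgroupCount_mul_pow_eq hn, subgroupCount_eq_ncard, Set.ncard_eq_toFinset_card _ hI,
    ← smul_eq_mul, ← Finset.sum_const, finsum_mem_eq_finite_toFinset_sum _ hI]
  refine Nat.add_le_add_left (Finset.sum_le_sum fun L hL => ?_) _
  have hL : L.index = n := hI.mem_toFinset.mp hL
  exact hL ▸ ncard_setOf_lt_stabilizer_le hb (hL ▸ hn)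

theorem abs_ncard_orbits_mul_sub_le (hb : 0 < b) {n : ℕ} (hn : n ≠ 0) :
    |((orbit ℤᵈ '' {x : ℤᵈ → Fin b | (orbit ℤᵈ x).ncard = n}).ncard : ℝ) * (b : ℝ)⁻¹ ^ n -
        subgroupCount d n / n| ≤ n ^ (d * d + d) * (√b)⁻¹ ^ n := by
  set o := (orbit ℤᵈ '' {x : ℤᵈ → Fin b | (orbit ℤᵈ x).ncard = n}).ncard
  set p := {x : ℤᵈ → Fin b | (stabilizer ℤᵈ x).index = n}.ncard
  set a := subgroupCount d n
  have hp : p ≤ a * b ^ n := (subgroupCount_mul_pow_eq hn).symm ▸ Nat.le_add_right _ _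
  have hdiff : a * b ^ n - p ≤ a * (n ^ d * b ^ (n / 2)) :=
    Nat.sub_le_iff_le_add'.mpr (subgroupCount_mul_pow_le hb hn)
  have hn' : (0 : ℝ) < n := by positivity
  have ho : (o : ℝ) = p / n := by
    rw [eq_div_iff hn'.ne']
    exact_mod_cast ncard_image_orbit_mul_eq_ncard_setOf_index_stabilizer_eq hn
  calc _ = |((a * b ^ n - p : ℕ) : ℝ) * (b : ℝ)⁻¹ ^ n / n| := by
        have hb' : (b : ℝ) ≠ 0 := by positivity
        rw [← abs_neg, Nat.cast_sub hp, ho]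
        congr 1
        push_cast
        rw [inv_pow]
        field_simp
        ring
    _ = ((a * b ^ n - p : ℕ) : ℝ) * (b : ℝ)⁻¹ ^ n / n := abs_of_nonneg (by positivity)
    _ ≤ ((a * (n ^ d * b ^ (n / 2)) : ℕ) : ℝ) * (b : ℝ)⁻¹ ^ n / n := by gcongr
    _ ≤ ((a * (n ^ d * b ^ (n / 2)) : ℕ) : ℝ) * (b : ℝ)⁻¹ ^ n :=
        div_le_self (by positivity) (by exact_mod_cast Nat.one_le_iff_ne_zero.mpr hn)
    _ ≤ n ^ (d * d) * n ^ d * ((b : ℝ) ^ (n / 2) * (b : ℝ)⁻¹ ^ n) := by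
        push_cast
        rw [← mul_assoc, mul_assoc _ _ ((b : ℝ)⁻¹ ^ n)]
        gcongr
        exact_mod_cast subgroupCount_le hn
    _ ≤ n ^ (d * d + d) * (√b)⁻¹ ^ n := by
        rw [pow_add]
        gcongr
        exact Real.pow_div_two_mul_inv_pow_le (by exact_mod_cast hb) n

end FullShift

theorem mertens_asymptotic_general (b d : ℕ) (hb : 2 ≤ b) :
    ∃ C : ℝ, ∀ N : ℕ, 1 ≤ N →
      |mertensSum d b N - ∑ n ∈ Finset.Icc 1 N, (subgroupCount d n : ℝ) / n| ≤ C := by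
  have hr : ‖(√(b : ℝ))⁻¹‖ < 1 := by
    rw [norm_inv, Real.norm_of_nonneg (Real.sqrt_nonneg _)]
    exact inv_lt_one_of_one_lt₀ (Real.lt_sqrt_of_sq_lt (by norm_cast))
  refine ⟨∑' n : ℕ, (n : ℝ) ^ (d * d + d) * (√(b : ℝ))⁻¹ ^ n, fun N _ => ?_⟩
  rw [mertensSum_eq_sum_ncard_orbits, ← Finset.sum_sub_distrib]
  calc _ ≤ ∑ n ∈ Finset.Icc 1 N, |_| := Finset.abs_sum_le_sum_abs _ _
    _ ≤ ∑ n ∈ Finset.Icc 1 N, (n : ℝ) ^ (d * d + d) * (√(b : ℝ))⁻¹ ^ n :=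
        Finset.sum_le_sum fun n hn => abs_ncard_orbits_mul_sub_le (by omega)
          (Nat.one_le_iff_ne_zero.mp (Finset.mem_Icc.mp hn).1)
    _ ≤ _ := (summable_pow_mul_geometric_of_norm_lt_one _ hr).sum_le_tsum _
        fun _ _ => by positivity

/-- For the full `ℤ^d`-shift on `b` symbols, `M_T(N) = ∑_{n=1}^N a_n(ℤ^d)/n + O(1)`. -/
theorem mertens_asymptotic (b d : ℕ) (hb : 2 ≤ b) (hd : 2 ≤ d) :
    ∃ C : ℝ, ∀ N : ℕ, 1 ≤ N →
      |mertensSum d b N - ∑ n ∈ Finset.Icc 1 N, (subgroupCount d n : ℝ) / n| ≤ C :=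
  mertens_asymptotic_general b d hb
end

section
/- Let T be the algebraic ℤ²-action on X = Y^ℤ, where Y is the Pontryagin dual of ℤ[1/2], defined by (T_{(1,0)} x)_k = 2 x_k and (T_{(0,1)} x)_k = x_{k+1}. Then for every n ≥ 1, the number of points fixed by the subgroup (n,0)ℤ ⊕ (0,1)ℤ is 2^n − 1, while the number of points fixed by (1,0)ℤ ⊕ (0,n)ℤ is 1. -/
/-- The 2-adic solenoid, the Pontryagin dual of `ℤ[1/2]`: a character is determined by
its values `y k` at `2^{-k}`, subject to `2 • y (k+1) = y k`. -/
def Solenoid : Type :=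
  {y : ℕ → AddCircle (1 : ℝ) // ∀ k, (2 : ℕ) • y (k + 1) = y k}

/-- Multiplication by 2 on the solenoid (the dual of multiplication by 2 on `ℤ[1/2]`). -/
noncomputable def double (y : Solenoid) : Solenoid :=
  ⟨fun k => (2 : ℕ) • y.1 k, fun k => congrArg (fun t => (2 : ℕ) • t) (y.2 k)⟩

/-! A point fixed by the shift is constant, so the first count is the number of solenoid points
`y` with `2 ^ n • y = y`. Such a point is determined by its zeroth coordinate `u`, a
`(2 ^ n - 1)`-torsion point of `ℝ/ℤ`: since `2 ^ (n - 1)` inverts `2` on that torsion, the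
`k`-th coordinate must be `2 ^ ((n - 1) * k) • u`, and every such `u` arises. Doubling fixes
only `0`, which gives the second count. -/

theorem AddCircle.card_nsmul_eq_zero (m : ℕ) [NeZero m] :
    Nat.card {u : UnitAddCircle // m • u = 0} = m := by
  have hrange (u : UnitAddCircle) :
      m • u = 0 ↔ u ∈ Set.range (ZMod.toAddCircle (N := m)) := by
    constructor
    · intro hu
      obtain ⟨k, -, rfl⟩ := (AddCircle.nsmul_eq_zero_iff (NeZero.pos m)).1 hu
      exact ⟨k, by rw [ZMod.toAddCircle_natCast, mul_one]⟩
    · rintro ⟨j, rfl⟩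
      rw [← map_nsmul, nsmul_eq_mul, ZMod.natCast_self, zero_mul, map_zero]
  rw [Nat.card_congr (Equiv.subtypeEquivRight hrange), Nat.card_range_of_injective
    (ZMod.toAddCircle_injective m), Nat.card_zmod]

theorem AddCircle.card_nsmul_eq_self (k : ℕ) (hk : 2 ≤ k) :
    Nat.card {u : UnitAddCircle // k • u = u} = k - 1 := by
  obtain ⟨m, rfl⟩ := Nat.exists_eq_add_of_le' (one_le_two.trans hk)
  have : NeZero m := ⟨by omega⟩
  simp_rw [succ_nsmul, add_eq_right, Nat.add_sub_cancel, AddCircle.card_nsmul_eq_zero]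

def shiftInvariantEquiv {α : Type*} (p : α → Prop) :
    {x : ℤ → α // (∀ i, p (x i)) ∧ ∀ i, x (i + 1) = x i} ≃ {a // p a} where
  toFun x := ⟨x.1 0, x.2.1 0⟩
  invFun a := ⟨fun _ => a.1, fun _ => a.2, fun _ => rfl⟩
  left_inv x := Subtype.ext <| funext fun i => by
    simpa using (Function.Periodic.int_mul_eq x.2.2 i).symm
  right_inv _ := rfl

namespace Solenoid

instance : Zero Solenoid := ⟨⟨0, fun _ => smul_zero 2⟩⟩

@[ext]
theorem ext {y z : Solenoid} (h : ∀ k, y.1 k = z.1 k) : y = z :=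
  Subtype.ext (funext h)

theorem double_iterate_apply (j : ℕ) (y : Solenoid) (k : ℕ) :
    (double^[j] y).1 k = 2 ^ j • y.1 k := by
  induction j generalizing y with
  | zero => simp
  | succ j ih =>
    rw [Function.iterate_succ_apply', pow_succ', mul_smul, ← ih]
    rfl

theorem double_eq_self_iff {y : Solenoid} : double y = y ↔ y = 0 := by
  simp only [Solenoid.ext_iff]
  refine forall_congr' fun k => ?_
  change 2 • y.1 k = y.1 k ↔ y.1 k = 0
  rw [two_nsmul, add_eq_right]

theorem coord_eq_of_iterate_double_eq_self {m : ℕ} {y : Solenoid} (h : double^[m + 1] y = y)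
    (k : ℕ) : y.1 k = 2 ^ (m * k) • y.1 0 := by
  induction k with
  | zero => simp
  | succ k ih =>
    calc y.1 (k + 1) = 2 ^ (m + 1) • y.1 (k + 1) := by rw [← double_iterate_apply, h]
      _ = 2 ^ m • y.1 k := by rw [pow_succ, mul_smul]; exact congrArg (2 ^ m • ·) (y.2 k)
      _ = 2 ^ (m * (k + 1)) • y.1 0 := by rw [ih, ← mul_nsmul', ← pow_add]; ring_nf

-- `2 ^ m` inverts `2` on the solutions of `2 ^ (m + 1) • u = u`.
def ofNsmulEqSelf (m : ℕ) (u : UnitAddCircle) (hu : 2 ^ (m + 1) • u = u) : Solenoid :=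
  ⟨fun k => 2 ^ (m * k) • u, fun k =>
    calc 2 • 2 ^ (m * (k + 1)) • u = 2 ^ (m * k) • 2 ^ (m + 1) • u := by
          rw [← mul_smul, ← mul_smul]; ring_nf
      _ = 2 ^ (m * k) • u := by rw [hu]⟩

theorem iterate_double_ofNsmulEqSelf (m : ℕ) (u : UnitAddCircle) (hu : 2 ^ (m + 1) • u = u) :
    double^[m + 1] (ofNsmulEqSelf m u hu) = ofNsmulEqSelf m u hu :=
  ext fun k => by
    rw [double_iterate_apply]
    change 2 ^ (m + 1) • 2 ^ (m * k) • u = 2 ^ (m * k) • u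
    rw [smul_comm, hu]

def iterateDoubleFixedEquiv (m : ℕ) :
    {y : Solenoid // double^[m + 1] y = y} ≃ {u : UnitAddCircle // 2 ^ (m + 1) • u = u} where
  toFun y := ⟨y.1.1 0, by rw [← double_iterate_apply, y.2]⟩
  invFun u := ⟨ofNsmulEqSelf m u.1 u.2, iterate_double_ofNsmulEqSelf m u.1 u.2⟩
  left_inv y := Subtype.ext <| ext fun k => (coord_eq_of_iterate_double_eq_self y.2 k).symm
  right_inv u := Subtype.ext <| one_nsmul u.1

end Solenoid

/-- For the `ℤ²`-action on `X = Solenoid^ℤ` generated by coordinatewise doubling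
`T_{(1,0)}` and the shift `T_{(0,1)}`, the points fixed by the subgroup
`(n,0)ℤ ⊕ (0,1)ℤ` number `2^n − 1`, while the points fixed by `(1,0)ℤ ⊕ (0,n)ℤ`
number `1`. -/
theorem solenoid_shift_fixed_points (n : ℕ) (hn : 1 ≤ n) :
    Nat.card {x : ℤ → Solenoid //
        (∀ i, double^[n] (x i) = x i) ∧ (∀ i, x (i + 1) = x i)} = 2 ^ n - 1 ∧
    Nat.card {x : ℤ → Solenoid //
        (∀ i, double (x i) = x i) ∧ (∀ i, x (i + n) = x i)} = 1 := by
  obtain ⟨m, rfl⟩ := Nat.exists_eq_add_of_le' hn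
  refine ⟨?_, ?_⟩
  · rw [Nat.card_congr (shiftInvariantEquiv fun y => double^[m + 1] y = y),
      Nat.card_congr (Solenoid.iterateDoubleFixedEquiv m),
      AddCircle.card_nsmul_eq_self _ (Nat.le_self_pow m.succ_ne_zero 2)]
  · exact Nat.card_eq_one_iff_exists.2
      ⟨⟨0, fun _ => Solenoid.double_eq_self_iff.2 rfl, fun _ => rfl⟩,
      fun x => Subtype.ext <| funext fun i => Solenoid.double_eq_self_iff.1 (x.2.1 i)⟩
end
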